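/- Let N ∈ {3,4} and let U_n be the truncated Aubin–Talenti bubbles. If N = 3, there exists C > 0 such that ∫_{ℝ³} U_n(x)² dx ≤ C/n for all integers n ≥ 1. If N = 4, there exists C > 0 such that ∫_{ℝ⁴} U_n(x)² dx ≤ C · ln(1+n²)/n² for all integers n ≥ 1. -/

import Mathlib

open Real MeasureTheory

/-- The radial profile of the truncated Aubin–Talenti bubble. -/
noncomputable def bubbleProfile (N n : ℕ) (r : ℝ) : ℝ :=
  if r < 1 then
    ((N : ℝ) * ((N : ℝ) - 2)) ^ (((N : ℝ) - 2) / 4)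
      * ((n : ℝ) / (1 + (n : ℝ) ^ 2 * r ^ 2)) ^ (((N : ℝ) - 2) / 2)
  else if r < 2 then
    ((N : ℝ) * ((N : ℝ) - 2)) ^ (((N : ℝ) - 2) / 4)
      * ((n : ℝ) / (1 + (n : ℝ) ^ 2)) ^ (((N : ℝ) - 2) / 2) * (2 - r)
  else 0

/-- The truncated Aubin–Talenti bubble `U_n` on `ℝ^N`. -/
noncomputable def Ubub (N n : ℕ) (x : EuclideanSpace ℝ (Fin N)) : ℝ :=
  bubbleProfile N n ‖x‖

/-!
In polar coordinates `∫ U_n² = N |B₁| ∫₀² r^{N-1} Θ_n(r)² dr`.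
On `[1, 2)` the profile is `O(n^{-(N-2)/2})`, so that piece is `O(n^{2-N})`. On `[0, 1)`,
`r^{N-1} Θ_n(r)² = A_N² n^{N-2} r^{N-1} / (1 + n² r²)^{N-2}`: for `N = 3` this is at most
`A_N² / n` pointwise, while for `N = 4` it is at most `A_N² r / (1 + n² r²)`, whose integral
is of order `log (1 + n²) / n²`.
-/

open Set

theorem setIntegral_Ioi_le_intervalIntegral {g h : ℝ → ℝ} {b : ℝ} (hb : 0 ≤ b)
    (hg : AEStronglyMeasurable g (volume.restrict (Ioc 0 b)))
    (hg_zero : ∀ y, b < y → g y = 0) (hg_nonneg : ∀ y ∈ Ioc 0 b, 0 ≤ g y)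
    (hgh : ∀ y ∈ Ioc 0 b, g y ≤ h y) (hh : IntervalIntegrable h volume 0 b) :
    ∫ y in Ioi 0, g y ≤ ∫ y in 0..b, h y := by
  have hg_int : IntegrableOn g (Ioc 0 b) := by
    refine hh.1.mono' hg ((ae_restrict_iff' measurableSet_Ioc).2 (.of_forall fun y hy ↦ ?_))
    rw [Real.norm_of_nonneg (hg_nonneg y hy)]
    exact hgh y hy
  rw [setIntegral_eq_of_subset_of_forall_sdiff_eq_zero measurableSet_Ioi Ioc_subset_Ioi_self
      fun y hy ↦ hg_zero y (not_le.1 fun h ↦ hy.2 ⟨hy.1, h⟩),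
    intervalIntegral.integral_of_le hb]
  exact setIntegral_mono_on hg_int hh.1 measurableSet_Ioc hgh

theorem integral_div_one_add_mul_sq {c : ℝ} (hc : 0 < c) (b : ℝ) :
    ∫ y in 0..b, y / (1 + c * y ^ 2) = Real.log (1 + c * b ^ 2) / (2 * c) := by
  have hpos : ∀ y : ℝ, 0 < 1 + c * y ^ 2 := fun y ↦ by positivity
  have hderiv : ∀ y ∈ uIcc 0 b, HasDerivAt (fun y ↦ Real.log (1 + c * y ^ 2) / (2 * c))
      (y / (1 + c * y ^ 2)) y := by
    intro y _
    refine ((((hasDerivAt_pow 2 y).const_mul c).const_add 1).log (hpos y).ne'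
      |>.div_const (2 * c)).congr_deriv ?_
    field_simp
    ring
  rw [intervalIntegral.integral_eq_sub_of_hasDerivAt hderiv
    ((continuous_id.div (by fun_prop) fun y ↦ (hpos y).ne').intervalIntegrable 0 b)]
  simp

theorem Real.log_one_add_sq_mul_four_le {x : ℝ} (hx : 1 ≤ x) :
    Real.log (1 + x ^ 2 * 2 ^ 2) ≤ 3 * Real.log (1 + x ^ 2) := by
  calc Real.log (1 + x ^ 2 * 2 ^ 2) ≤ Real.log ((1 + x ^ 2) ^ 3) :=
        Real.log_le_log (by positivity)
          (by nlinarith [one_le_pow₀ (n := 4) hx, pow_nonneg (sq_nonneg x) 3])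
    _ = 3 * Real.log (1 + x ^ 2) := by simp [Real.log_pow]

theorem measurable_bubbleProfile (N n : ℕ) : Measurable (bubbleProfile N n) :=
  .ite measurableSet_Iio (by fun_prop) (.ite measurableSet_Iio (by fun_prop) measurable_const)

theorem bubbleProfile_of_two_le {N n : ℕ} {r : ℝ} (hr : 2 ≤ r) : bubbleProfile N n r = 0 := by
  simp [bubbleProfile, not_lt.2 hr, not_lt.2 (one_le_two.trans hr)]

noncomputable def bubbleAmplitude (N : ℕ) : ℝ :=
  ((N : ℝ) * ((N : ℝ) - 2)) ^ (((N : ℝ) - 2) / 4)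

theorem bubbleAmplitude_pos {N : ℕ} (hN : 3 ≤ N) : 0 < bubbleAmplitude N := by
  have : (3 : ℝ) ≤ N := by exact_mod_cast hN
  unfold bubbleAmplitude
  exact Real.rpow_pos_of_pos (by nlinarith) _

theorem rpow_sub_two_div_two_sq {N : ℕ} (hN : 2 ≤ N) {x : ℝ} (hx : 0 ≤ x) :
    (x ^ (((N : ℝ) - 2) / 2)) ^ 2 = x ^ (N - 2) := by
  rw [← Real.rpow_natCast, ← Real.rpow_mul hx, ← Real.rpow_natCast, Nat.cast_sub hN]
  norm_num

theorem bubbleProfile_sq {N : ℕ} (hN : 2 ≤ N) (n : ℕ) (r : ℝ) :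
    bubbleProfile N n r ^ 2 = bubbleAmplitude N ^ 2 *
      if r < 1 then ((n : ℝ) / (1 + (n : ℝ) ^ 2 * r ^ 2)) ^ (N - 2)
      else if r < 2 then ((n : ℝ) / (1 + (n : ℝ) ^ 2)) ^ (N - 2) * (2 - r) ^ 2
      else 0 := by
  unfold bubbleProfile bubbleAmplitude
  split_ifs
  · rw [mul_pow, rpow_sub_two_div_two_sq hN (by positivity)]
  · rw [mul_pow, mul_pow, rpow_sub_two_div_two_sq hN (by positivity), mul_assoc]
  · ring

theorem sq_mul_bubbleProfile_three_sq_le {n : ℕ} (hn : 1 ≤ n) (y : ℝ) :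
    y ^ 2 * bubbleProfile 3 n y ^ 2 ≤ bubbleAmplitude 3 ^ 2 * (4 / n) := by
  have hn : (1 : ℝ) ≤ n := by exact_mod_cast hn
  rw [bubbleProfile_sq (by norm_num), mul_left_comm]
  gcongr
  simp only [Nat.reduceSub, pow_one]
  split_ifs with h1 h2
  · rw [mul_div_assoc', div_le_div_iff₀ (by positivity) (by positivity)]
    nlinarith [sq_nonneg (n * y), sq_nonneg y]
  · have hq : (n : ℝ) / (1 + (n : ℝ) ^ 2) ≤ 1 / n := by
      rw [div_le_div_iff₀ (by positivity) (by positivity)]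
      nlinarith
    calc y ^ 2 * ((n : ℝ) / (1 + (n : ℝ) ^ 2) * (2 - y) ^ 2)
        ≤ 2 ^ 2 * (1 / n * 1 ^ 2) := by
          gcongr <;> linarith
      _ = 4 / (n : ℝ) := by ring
  · simp only [mul_zero]; positivity

theorem cube_mul_bubbleProfile_four_sq_le {n : ℕ} (hn : 1 ≤ n) {y : ℝ} (hy : 0 ≤ y) :
    y ^ 3 * bubbleProfile 4 n y ^ 2
      ≤ bubbleAmplitude 4 ^ 2 * (y / (1 + (n : ℝ) ^ 2 * y ^ 2) + 8 / (n : ℝ) ^ 2) := by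
  have hn : (1 : ℝ) ≤ n := by exact_mod_cast hn
  rw [bubbleProfile_sq (by norm_num), mul_left_comm]
  gcongr
  simp only [Nat.reduceSub]
  split_ifs with h1 h2
  · have hD : 0 < 1 + (n : ℝ) ^ 2 * y ^ 2 := by positivity
    have h : y ^ 3 * ((n : ℝ) / (1 + (n : ℝ) ^ 2 * y ^ 2)) ^ 2
        ≤ y / (1 + (n : ℝ) ^ 2 * y ^ 2) := by
      rw [div_pow, mul_div_assoc', div_le_div_iff₀ (by positivity) hD]
      nlinarith [mul_nonneg hy (mul_nonneg hD.le (sq_nonneg ((n : ℝ) * y)))]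
    have : (0 : ℝ) ≤ 8 / (n : ℝ) ^ 2 := by positivity
    linarith
  · have hq : ((n : ℝ) / (1 + (n : ℝ) ^ 2)) ^ 2 ≤ 1 / (n : ℝ) ^ 2 := by
      rw [div_pow, div_le_div_iff₀ (by positivity) (by positivity)]
      nlinarith
    have : y ^ 3 * (((n : ℝ) / (1 + (n : ℝ) ^ 2)) ^ 2 * (2 - y) ^ 2) ≤ 8 / (n : ℝ) ^ 2 :=
      calc y ^ 3 * (((n : ℝ) / (1 + (n : ℝ) ^ 2)) ^ 2 * (2 - y) ^ 2)
          ≤ 2 ^ 3 * (1 / (n : ℝ) ^ 2 * 1 ^ 2) := by gcongr; linarith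
        _ = 8 / (n : ℝ) ^ 2 := by ring
    have : (0 : ℝ) ≤ y / (1 + (n : ℝ) ^ 2 * y ^ 2) := by positivity
    linarith
  · simp only [mul_zero]; positivity

namespace Ubub

theorem integral_sq_eq (N n : ℕ) [NeZero N] :
    ∫ x, Ubub N n x ^ 2
      = N * volume.real (Metric.ball (0 : EuclideanSpace ℝ (Fin N)) 1)
        * ∫ y in Ioi 0, y ^ (N - 1) * bubbleProfile N n y ^ 2 := by
  simpa [Ubub, mul_assoc] using
    integral_fun_norm_addHaar (volume : Measure (EuclideanSpace ℝ (Fin N)))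
      fun r ↦ bubbleProfile N n r ^ 2

theorem integral_sq_le_of_radial_le {N n : ℕ} [NeZero N] {h : ℝ → ℝ}
    (hh : IntervalIntegrable h volume 0 2)
    (hbound : ∀ y ∈ Ioc (0 : ℝ) 2, y ^ (N - 1) * bubbleProfile N n y ^ 2 ≤ h y) :
    ∫ x, Ubub N n x ^ 2
      ≤ N * volume.real (Metric.ball (0 : EuclideanSpace ℝ (Fin N)) 1)
        * ∫ y in 0..2, h y := by
  rw [integral_sq_eq]
  gcongr
  refine setIntegral_Ioi_le_intervalIntegral zero_le_two ?_ (fun y hy ↦ ?_)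
    (fun y hy ↦ by have := hy.1; positivity) hbound hh
  · exact ((measurable_id.pow_const _).mul
      ((measurable_bubbleProfile N n).pow_const 2)).aestronglyMeasurable
  · rw [bubbleProfile_of_two_le hy.le]
    ring

theorem integral_sq_three_le {n : ℕ} (hn : 1 ≤ n) :
    ∫ x, Ubub 3 n x ^ 2
      ≤ 24 * volume.real (Metric.ball (0 : EuclideanSpace ℝ (Fin 3)) 1)
        * bubbleAmplitude 3 ^ 2 / n := by
  calc ∫ x, Ubub 3 n x ^ 2
      ≤ 3 * volume.real (Metric.ball (0 : EuclideanSpace ℝ (Fin 3)) 1)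
        * ∫ _ in (0 : ℝ)..2, bubbleAmplitude 3 ^ 2 * (4 / n) :=
        integral_sq_le_of_radial_le intervalIntegrable_const
          fun y _ ↦ sq_mul_bubbleProfile_three_sq_le hn y
    _ = _ := by
        rw [intervalIntegral.integral_const, smul_eq_mul]
        ring

theorem integral_sq_four_le {n : ℕ} (hn : 1 ≤ n) :
    ∫ x, Ubub 4 n x ^ 2
      ≤ 4 * volume.real (Metric.ball (0 : EuclideanSpace ℝ (Fin 4)) 1) * bubbleAmplitude 4 ^ 2
        * (3 / 2 + 16 / Real.log 2) * Real.log (1 + (n : ℝ) ^ 2) / (n : ℝ) ^ 2 := by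
  have hn' : (1 : ℝ) ≤ n := by exact_mod_cast hn
  have hlog2 : 0 < Real.log 2 := Real.log_pos one_lt_two
  have hlog : Real.log 2 ≤ Real.log (1 + (n : ℝ) ^ 2) := Real.log_le_log two_pos (by nlinarith)
  have hcont : Continuous fun y : ℝ ↦ y / (1 + (n : ℝ) ^ 2 * y ^ 2) :=
    continuous_id.div (by fun_prop) fun y ↦ by positivity
  have hradial : ∫ y in (0 : ℝ)..2, y / (1 + (n : ℝ) ^ 2 * y ^ 2) + 8 / (n : ℝ) ^ 2
      ≤ (3 / 2 + 16 / Real.log 2) * Real.log (1 + (n : ℝ) ^ 2) / (n : ℝ) ^ 2 := by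
    rw [intervalIntegral.integral_add (hcont.intervalIntegrable 0 2) intervalIntegrable_const,
      integral_div_one_add_mul_sq (by positivity), intervalIntegral.integral_const,
      smul_eq_mul]
    have h16 : 16 ≤ 16 / Real.log 2 * Real.log (1 + (n : ℝ) ^ 2) := by
      rw [div_mul_eq_mul_div, le_div_iff₀ hlog2]
      linarith
    calc Real.log (1 + (n : ℝ) ^ 2 * 2 ^ 2) / (2 * (n : ℝ) ^ 2) + (2 - 0) * (8 / (n : ℝ) ^ 2)
        = (Real.log (1 + (n : ℝ) ^ 2 * 2 ^ 2) / 2 + 16) / (n : ℝ) ^ 2 := by ring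
      _ ≤ (3 * Real.log (1 + (n : ℝ) ^ 2) / 2 + 16 / Real.log 2 * Real.log (1 + (n : ℝ) ^ 2))
          / (n : ℝ) ^ 2 := by
        gcongr
        exact Real.log_one_add_sq_mul_four_le hn'
      _ = _ := by ring
  calc ∫ x, Ubub 4 n x ^ 2
      ≤ 4 * volume.real (Metric.ball (0 : EuclideanSpace ℝ (Fin 4)) 1)
        * ∫ y in (0 : ℝ)..2,
            bubbleAmplitude 4 ^ 2 * (y / (1 + (n : ℝ) ^ 2 * y ^ 2) + 8 / (n : ℝ) ^ 2) :=
        integral_sq_le_of_radial_le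
          (((hcont.add continuous_const).const_mul _).intervalIntegrable 0 2)
          fun y hy ↦ cube_mul_bubbleProfile_four_sq_le hn hy.1.le
    _ ≤ _ := by
        have hA : 0 ≤ 4 * volume.real (Metric.ball (0 : EuclideanSpace ℝ (Fin 4)) 1)
            * bubbleAmplitude 4 ^ 2 := by positivity
        rw [intervalIntegral.integral_const_mul]
        linear_combination mul_le_mul_of_nonneg_left hradial hA

end Ubub

theorem stmt_7_general (N : ℕ) :
    (N = 3 → ∃ C : ℝ, 0 < C ∧ ∀ n : ℕ, 1 ≤ n →
      (∫ x : EuclideanSpace ℝ (Fin N), (Ubub N n x) ^ 2) ≤ C / (n : ℝ)) ∧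
    (N = 4 → ∃ C : ℝ, 0 < C ∧ ∀ n : ℕ, 1 ≤ n →
      (∫ x : EuclideanSpace ℝ (Fin N), (Ubub N n x) ^ 2)
        ≤ C * Real.log (1 + (n : ℝ) ^ 2) / (n : ℝ) ^ 2) := by
  have hball (m : ℕ) : 0 < volume.real (Metric.ball (0 : EuclideanSpace ℝ (Fin m)) 1) :=
    ENNReal.toReal_pos (Metric.measure_ball_pos volume _ one_pos).ne' measure_ball_lt_top.ne
  refine ⟨?_, ?_⟩
  · rintro rfl
    have hA := bubbleAmplitude_pos (le_refl 3)
    exact ⟨_, by have := hball 3; positivity, fun n hn ↦ Ubub.integral_sq_three_le hn⟩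
  · rintro rfl
    have hA := bubbleAmplitude_pos (by norm_num : 3 ≤ 4)
    have hlog2 : 0 < Real.log 2 := Real.log_pos one_lt_two
    exact ⟨_, by have := hball 4; positivity, fun n hn ↦ Ubub.integral_sq_four_le hn⟩

theorem stmt_7 (N : ℕ) (hN : N = 3 ∨ N = 4) :
    (N = 3 → ∃ C : ℝ, 0 < C ∧ ∀ n : ℕ, 1 ≤ n →
      (∫ x : EuclideanSpace ℝ (Fin N), (Ubub N n x) ^ 2) ≤ C / (n : ℝ)) ∧
    (N = 4 → ∃ C : ℝ, 0 < C ∧ ∀ n : ℕ, 1 ≤ n →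
      (∫ x : EuclideanSpace ℝ (Fin N), (Ubub N n x) ^ 2)
        ≤ C * Real.log (1 + (n : ℝ) ^ 2) / (n : ℝ) ^ 2) :=
  stmt_7_general N
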